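/- arXiv:1004.2639 — 4 statements merged into one kernel-verified Lean document; each statement's English description precedes it below -/
import Mathlib

section
/- For every n ≥ 3, the number of acyclic orientations of the wheel graph W_n equals 3^n − 3. -/
/-- The wheel graph `W_n` on vertex set `{0, 1, …, n}`: the hub `0` is adjacent to every
rim vertex `1, …, n`, and two rim vertices are adjacent iff their labels are consecutive
modulo `n`. -/
def wheelGraph (n : ℕ) : SimpleGraph (Fin (n + 1)) :=
  SimpleGraph.fromRel (fun i j => i = 0 ∨ ((i.val : ZMod n) = (j.val : ZMod n) + 1))

/-- The set of spanning trees of a graph `G`, regarded as edge sets. -/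
def spanningTreeSet {V : Type*} (G : SimpleGraph V) : Set (Set (Sym2 V)) :=
  {F | F ⊆ G.edgeSet ∧ (SimpleGraph.fromEdgeSet F).IsTree}

/-- The set of acyclic orientations of a graph `G`: relations orienting each edge of `G`
in exactly one direction, whose transitive closure is irreflexive. -/
def acyclicOrientationSet {V : Type*} (G : SimpleGraph V) : Set (V → V → Prop) :=
  {o | (∀ a b, o a b → G.Adj a b) ∧ (∀ a b, G.Adj a b → (o a b ↔ ¬ o b a)) ∧
    (∀ a, ¬ Relation.TransGen o a a)}

/-!
Record an orientation of `W_n` by the directions of the spoke at each rim vertex `k` and of the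
rim edge `{k, k + 1}`. It is acyclic iff no triangle (hub, k, k + 1) is directed and the rim is
not a directed cycle. For the nontrivial direction, a potential puts the hub between the rim
vertices it points to and those pointing to it, and orders each of these two levels by partial
sums along the rim, cut open at a forward edge.

Once the spoke at `k` is fixed, exactly three of the four choices for the rim edge `{k, k + 1}` and
the spoke at `k + 1` keep the triangle acyclic, so the orientations with acyclic triangles become
words of length `n` over three letters; the spokes are recovered by propagating around the rim
from a letter that forces the next spoke. The rim is a directed cycle exactly when the word is
constant, which leaves `3 ^ n - 3` words.
-/

open Finset Function Relation

namespace ZMod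

variable {n : ℕ}

lemma add_one_add_one_ne_self (hn : 3 ≤ n) (k : ZMod n) : k + 1 + 1 ≠ k := by
  intro h
  have h2 : ((2 : ℕ) : ZMod n) = 0 := by push_cast; linear_combination h
  have := Nat.le_of_dvd two_pos ((natCast_eq_zero_iff 2 n).1 h2)
  omega

variable [NeZero n]

lemma val_add_one_of_ne_neg_one {x : ZMod n} (hx : x ≠ -1) : (x + 1).val = x.val + 1 := by
  have hlt : x.val + 1 < n := by
    by_contra! h
    apply hx
    have hn : x.val + 1 = n := by have := x.val_lt; omega
    rw [eq_neg_iff_add_eq_zero, ← natCast_zmod_val x, ← Nat.cast_add_one, hn, natCast_self]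
  have hx1 : x + 1 = ((x.val + 1 : ℕ) : ZMod n) := by push_cast; rw [natCast_zmod_val]
  rw [hx1, val_natCast_of_lt hlt]

lemma val_lt_val_neg_one {x : ZMod n} (hx : x ≠ -1) : x.val < (-1 : ZMod n).val := by
  obtain ⟨m, rfl⟩ : ∃ m, n = m + 1 := Nat.exists_eq_succ_of_ne_zero (NeZero.ne n)
  have := (x + 1).val_lt
  rw [val_add_one_of_ne_neg_one hx] at this
  rw [val_neg_one]
  omega

lemma add_one_induction {P : ZMod n → Prop} (j : ZMod n) (hj : P j)
    (h : ∀ i, P i → P (i + 1)) (k : ZMod n) : P k := by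
  have key : ∀ t : ℕ, P (j + t) := by
    intro t
    induction t with
    | zero => simpa using hj
    | succ t ih => simpa [add_assoc] using h _ ih
  simpa using key (k - j).val

lemma apply_eq_of_le_add_one {α : Type*} [PartialOrder α] {f : ZMod n → α}
    (h : ∀ k, f k ≤ f (k + 1)) (i j : ZMod n) : f i = f j :=
  have hle : ∀ i j, f i ≤ f j := fun i =>
    add_one_induction (P := fun j => f i ≤ f j) i le_rfl fun j hj => hj.trans (h j)
  (hle i j).antisymm (hle j i)

lemma transGen_of_forall_add_one {α : Type*} {R : α → α → Prop} {f : ZMod n → α}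
    (h : ∀ k, R (f k) (f (k + 1))) (k : ZMod n) : TransGen R (f k) (f k) := by
  have key : ∀ j, TransGen R (f k) (f (j + 1)) :=
    add_one_induction (P := fun j => TransGen R (f k) (f (j + 1))) k (.single (h k))
      fun j hj => hj.tail (h (j + 1))
  simpa using key (k - 1)

lemma existsUnique_add_one_eq {α : Type*} [Nonempty α] (s : ZMod n → α → α) {p : ZMod n}
    (hp : ∀ x y, s p x = s p y) : ∃! u : ZMod n → α, ∀ i, u (i + 1) = s i (u i) := by
  let seq : ℕ → α := fun t =>
    Nat.rec (s p (Classical.arbitrary α)) (fun t y => s (p + 1 + t) y) t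
  have hseq : ∀ i, seq (i + 1 - (p + 1)).val = s i (seq (i - (p + 1)).val) := by
    intro i
    by_cases hi : i = p
    · subst hi
      simpa [seq] using hp _ _
    · have hne : i - (p + 1) ≠ -1 := fun h => hi (by linear_combination h)
      rw [show i + 1 - (p + 1) = i - (p + 1) + 1 by ring, val_add_one_of_ne_neg_one hne]
      show s (p + 1 + ((i - (p + 1)).val : ZMod n)) _ = _
      rw [natCast_zmod_val, add_sub_cancel]
  refine ⟨fun k => seq (k - (p + 1)).val, hseq, fun u hu => funext fun k => ?_⟩
  refine add_one_induction (P := fun k => u k = seq (k - (p + 1)).val) (p + 1) ?_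
    (fun i hi => by rw [hu, hseq, hi]) k
  rw [hu, hseq, hp]

end ZMod

lemma ncard_setOf_forall_ne_const (α β : Type*) [Fintype α] [Nonempty α] [Fintype β] :
    {f : α → β | ∀ b, f ≠ const α b}.ncard =
      Fintype.card β ^ Fintype.card α - Fintype.card β := by
  classical
  have : {f : α → β | ∀ b, f ≠ const α b} = (Set.range (const α))ᶜ := by
    ext f
    simp [eq_comm]
  rw [this, Set.ncard_compl, Set.ncard_range_of_injective const_injective,
    Nat.card_eq_fintype_card, Fintype.card_fun, Nat.card_eq_fintype_card]

section Orientation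

variable {V : Type*} {G : SimpleGraph V} {o o' : V → V → Prop}

def IsOrientation (G : SimpleGraph V) (o : V → V → Prop) : Prop :=
  (∀ a b, o a b → G.Adj a b) ∧ ∀ a b, G.Adj a b → (o a b ↔ ¬ o b a)

lemma mem_acyclicOrientationSet_iff :
    o ∈ acyclicOrientationSet G ↔ IsOrientation G o ∧ ∀ a, ¬ TransGen o a a :=
  and_assoc.symm

lemma IsOrientation.ext (ho : IsOrientation G o) (ho' : IsOrientation G o')
    (h : ∀ a b, G.Adj a b → (o a b ↔ o' a b) ∨ (o b a ↔ o' b a)) : o = o' := by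
  funext a b
  apply propext
  by_cases hab : G.Adj a b
  · rcases h a b hab with h | h
    · exact h
    · rw [ho.2 a b hab, ho'.2 a b hab, h]
  · exact iff_of_false (mt (ho.1 a b) hab) (mt (ho'.1 a b) hab)

lemma not_transGen_self_of_lt {β : Type*} [Preorder β] (F : V → β)
    (hF : ∀ a b, o a b → F a < F b) (a : V) : ¬ TransGen o a a := fun h =>
  lt_irrefl (F a) <| by
    have : TransGen (· < ·) (F a) (F a) := TransGen.lift F hF a a h
    rwa [transGen_eq_self] at this

end Orientation

namespace Wheel

variable {n : ℕ}

/-- `fromHub k`: the spoke at `k` points away from the hub; `forward k`: the rim edge `{k, k + 1}`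
points to `k + 1`. -/
@[ext]
structure Config (n : ℕ) where
  fromHub : ZMod n → Bool
  forward : ZMod n → Bool

namespace Config

variable (c : Config n)

def TrianglesAcyclic : Prop :=
  ∀ k, ¬ (c.fromHub k ∧ c.forward k ∧ c.fromHub (k + 1) = false) ∧
    ¬ (c.fromHub k = false ∧ c.forward k = false ∧ c.fromHub (k + 1))

def IsAdmissible : Prop :=
  c.TrianglesAcyclic ∧ ∀ β, c.forward ≠ const _ β

end Config

section Rim

variable [NeZero n]

def rim (k : ZMod n) : Fin (n + 1) := ⟨k.val + 1, Nat.succ_lt_succ k.val_lt⟩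

lemma rim_ne_zero (k : ZMod n) : rim k ≠ 0 := Fin.ne_of_val_ne (Nat.succ_ne_zero _)

lemma rim_injective : Injective (rim : ZMod n → Fin (n + 1)) := fun k m h =>
  ZMod.val_injective n (by simpa [rim] using congrArg Fin.val h)

lemma natCast_rim (k : ZMod n) : ((rim k : ℕ) : ZMod n) = k + 1 := by simp [rim]

lemma forall_vertex {P : Fin (n + 1) → Prop} : (∀ v, P v) ↔ P 0 ∧ ∀ k, P (rim k) := by
  refine ⟨fun h => ⟨h 0, fun k => h (rim k)⟩, fun ⟨h0, hrim⟩ v => ?_⟩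
  rcases Fin.eq_zero_or_eq_succ v with rfl | ⟨i, rfl⟩
  · exact h0
  · convert hrim (i.val : ZMod n) using 2
    ext
    simp [rim, ZMod.val_natCast_of_lt i.isLt]

lemma adj_zero_rim (k : ZMod n) : (wheelGraph n).Adj 0 (rim k) := by
  simp [wheelGraph, (rim_ne_zero k).symm]

lemma adj_rim_rim {k m : ZMod n} :
    (wheelGraph n).Adj (rim k) (rim m) ↔ k ≠ m ∧ (m = k + 1 ∨ k = m + 1) := by
  simp only [wheelGraph, SimpleGraph.fromRel_adj, rim_injective.ne_iff, natCast_rim, rim_ne_zero,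
    false_or, add_left_inj]
  tauto

namespace Config

def orientation (c : Config n) (a b : Fin (n + 1)) : Prop :=
  (a = 0 ∧ ∃ k, b = rim k ∧ c.fromHub k) ∨ (b = 0 ∧ ∃ k, a = rim k ∧ c.fromHub k = false) ∨
    (∃ k, a = rim k ∧ b = rim (k + 1) ∧ c.forward k) ∨
    (∃ k, a = rim (k + 1) ∧ b = rim k ∧ c.forward k = false)

variable (c : Config n) (k m : ZMod n)

@[simp] lemma not_orientation_zero_zero : ¬ c.orientation 0 0 := by
  simp [orientation, (rim_ne_zero _).symm]

@[simp] lemma orientation_zero_rim : c.orientation 0 (rim k) ↔ c.fromHub k := by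
  simp [orientation, rim_injective.eq_iff, rim_ne_zero, (rim_ne_zero _).symm]

@[simp] lemma orientation_rim_zero : c.orientation (rim k) 0 ↔ c.fromHub k = false := by
  simp [orientation, rim_injective.eq_iff, rim_ne_zero, (rim_ne_zero _).symm]

@[simp] lemma orientation_rim_rim : c.orientation (rim k) (rim m) ↔
    (m = k + 1 ∧ c.forward k) ∨ (k = m + 1 ∧ c.forward m = false) := by
  simp only [orientation, rim_injective.eq_iff, rim_ne_zero, false_and, false_or]
  constructor
  · rintro (⟨j, rfl, rfl, h⟩ | ⟨j, rfl, rfl, h⟩)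
    exacts [Or.inl ⟨rfl, h⟩, Or.inr ⟨rfl, h⟩]
  · rintro (⟨rfl, h⟩ | ⟨rfl, h⟩)
    exacts [Or.inl ⟨k, rfl, rfl, h⟩, Or.inr ⟨m, rfl, rfl, h⟩]

variable {k}

lemma orientation_rim_add_one (hn : 3 ≤ n) :
    c.orientation (rim k) (rim (k + 1)) ↔ c.forward k := by
  simp [(ZMod.add_one_add_one_ne_self hn k).symm]

lemma orientation_add_one_rim (hn : 3 ≤ n) :
    c.orientation (rim (k + 1)) (rim k) ↔ c.forward k = false := by
  simp [(ZMod.add_one_add_one_ne_self hn k).symm]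

lemma isOrientation_orientation (hn : 3 ≤ n) : IsOrientation (wheelGraph n) c.orientation := by
  have : Fact (1 < n) := ⟨by omega⟩
  refine ⟨?_, ?_⟩ <;> simp only [forall_vertex]
  · refine ⟨⟨by simp, fun k _ => adj_zero_rim k⟩,
      fun k => ⟨fun _ => (adj_zero_rim k).symm, fun m h => ?_⟩⟩
    rcases (c.orientation_rim_rim k m).1 h with ⟨rfl, -⟩ | ⟨rfl, -⟩ <;> simp [adj_rim_rim]
  · refine ⟨⟨by simp, by simp⟩, fun k => ⟨by simp, fun m h => ?_⟩⟩
    obtain ⟨-, rfl | rfl⟩ := adj_rim_rim.1 h <;>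
      simp [c.orientation_rim_add_one hn, c.orientation_add_one_rim hn]

variable {c}

lemma isAdmissible_of_acyclic (hn : 3 ≤ n) (h : ∀ a, ¬ TransGen c.orientation a a) :
    c.IsAdmissible := by
  refine ⟨fun k => ⟨fun ⟨h₁, h₂, h₃⟩ => h 0 ?_, fun ⟨h₁, h₂, h₃⟩ => h 0 ?_⟩, fun β hβ => ?_⟩
  · exact .tail (.tail (.single ((c.orientation_zero_rim k).2 h₁))
      ((c.orientation_rim_add_one hn).2 h₂)) ((c.orientation_rim_zero _).2 h₃)
  · exact .tail (.tail (.single ((c.orientation_zero_rim _).2 h₃))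
      ((c.orientation_add_one_rim hn).2 h₂)) ((c.orientation_rim_zero k).2 h₁)
  · cases β
    · apply h (rim 0)
      rw [← transGen_swap]
      exact ZMod.transGen_of_forall_add_one (f := rim)
        (fun k => (c.orientation_add_one_rim hn).2 (congrFun hβ k)) 0
    · exact h (rim 0) (ZMod.transGen_of_forall_add_one (f := rim)
        (fun k => (c.orientation_rim_add_one hn).2 (congrFun hβ k)) 0)

end Config

open scoped Classical in
noncomputable def toConfig (o : Fin (n + 1) → Fin (n + 1) → Prop) : Config n :=
  ⟨fun k => decide (o 0 (rim k)), fun k => decide (o (rim k) (rim (k + 1)))⟩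

lemma toConfig_orientation (hn : 3 ≤ n) (c : Config n) : toConfig c.orientation = c := by
  ext k <;> simp [toConfig, c.orientation_rim_add_one hn]

lemma orientation_toConfig (hn : 3 ≤ n) {o : Fin (n + 1) → Fin (n + 1) → Prop}
    (ho : IsOrientation (wheelGraph n) o) : (toConfig o).orientation = o := by
  refine ((toConfig o).isOrientation_orientation hn).ext ho ?_
  simp only [forall_vertex]
  refine ⟨⟨fun h => absurd h (SimpleGraph.irrefl _), fun k _ => .inl (by simp [toConfig])⟩,
    fun k => ⟨fun _ => .inr (by simp [toConfig]), fun m h => ?_⟩⟩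
  obtain ⟨-, rfl | rfl⟩ := adj_rim_rim.1 h
  exacts [.inl (by rw [Config.orientation_rim_add_one _ hn]; simp [toConfig]),
    .inr (by rw [Config.orientation_rim_add_one _ hn]; simp [toConfig])]

/- Partial sums of `1` along forward and `-n` along backward edges, starting just after `j`: the
backward edge `j'` makes the sum at `j` negative, which closes up the cycle. -/
lemma exists_rim_potential (r : ZMod n → Bool) {j j' : ZMod n} (hj : r j) (hj' : r j' = false) :
    ∃ f : ZMod n → ℤ, ∀ k, (r k → f k < f (k + 1)) ∧ (r k = false → f (k + 1) < f k) := by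
  let w : ZMod n → ℤ := fun x => if r x then 1 else -n
  let f : ZMod n → ℤ := fun i => ∑ t ∈ range (i - (j + 1)).val, w (j + 1 + t)
  have hstep : ∀ k, k ≠ j → f (k + 1) = f k + w k := by
    intro k hk
    have hne : k - (j + 1) ≠ -1 := fun h => hk (by linear_combination h)
    simp only [f, show k + 1 - (j + 1) = k - (j + 1) + 1 by ring,
      ZMod.val_add_one_of_ne_neg_one hne, sum_range_succ, ZMod.natCast_zmod_val, add_sub_cancel]
  have hjump : f j < f (j + 1) := by
    set m := (j - (j + 1)).val
    set t₀ := (j' - (j + 1)).val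
    have ht : t₀ ∈ range m := by
      have hne : j' - (j + 1) ≠ -1 := by
        intro h
        rw [show j' = j by linear_combination h, hj] at hj'
        exact Bool.noConfusion hj'
      have hm : m = (-1 : ZMod n).val := congrArg ZMod.val (by ring)
      rw [mem_range, hm]
      exact ZMod.val_lt_val_neg_one hne
    have hrest : ∑ t ∈ (range m).erase t₀, w (j + 1 + t) ≤ ((m - 1 : ℕ) : ℤ) :=
      calc _ ≤ ((range m).erase t₀).card • (1 : ℤ) :=
            sum_le_card_nsmul _ _ _ fun t _ => by simp only [w]; split_ifs <;> omega
        _ = ((m - 1 : ℕ) : ℤ) := by rw [card_erase_of_mem ht, card_range, nsmul_one]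
    have hfj : f j = -n + ∑ t ∈ (range m).erase t₀, w (j + 1 + t) := by
      show ∑ t ∈ range m, w (j + 1 + t) = _
      rw [← add_sum_erase _ _ ht]
      simp [w, t₀, hj']
    have hf : f (j + 1) = 0 := by simp [f]
    have := (j - (j + 1)).val_lt
    have := mem_range.1 ht
    omega
  refine ⟨f, fun k => ?_⟩
  by_cases hk : k = j
  · subst hk
    exact ⟨fun _ => hjump, fun h => by simp_all⟩
  · rw [hstep k hk]
    constructor <;> intro h <;> simp [w, h, NeZero.pos n]

lemma Config.exists_potential {c : Config n} (hc : c.IsAdmissible) :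
    ∃ F : Fin (n + 1) → ℕ ×ₗ ℤ, ∀ a b, c.orientation a b → F a < F b := by
  obtain ⟨htri, hnc⟩ := hc
  obtain ⟨j, hj⟩ : ∃ j, c.forward j := by simpa using ne_iff.1 (hnc false)
  obtain ⟨j', hj'⟩ : ∃ j, c.forward j = false := by simpa using ne_iff.1 (hnc true)
  obtain ⟨f, hf⟩ := exists_rim_potential c.forward hj hj'
  let level : Bool → ℕ := fun s => if s then 2 else 0
  let F : Fin (n + 1) → ℕ ×ₗ ℤ := fun v =>
    if v = 0 then toLex (1, 0) else toLex (level (c.fromHub (v.val - 1 : ℕ)), f (v.val - 1 : ℕ))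
  have hF : ∀ k, F (rim k) = toLex (level (c.fromHub k), f k) := by simp [F, rim]
  refine ⟨F, forall_vertex.2 ⟨forall_vertex.2 ⟨by simp, fun k h => ?_⟩,
    fun k => forall_vertex.2 ⟨fun h => ?_, fun m h => ?_⟩⟩⟩
  · simp_all [F, level, Prod.Lex.toLex_lt_toLex]
  · simp_all [F, level, Prod.Lex.toLex_lt_toLex]
  · rw [hF, hF, Prod.Lex.toLex_lt_toLex]
    rcases (c.orientation_rim_rim k m).1 h with ⟨rfl, hk⟩ | ⟨rfl, hm⟩
    · have := (hf k).1 hk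
      have := (htri k).1
      cases hk₀ : c.fromHub k <;> cases hk₁ : c.fromHub (k + 1) <;> simp_all [level]
    · have := (hf m).2 hm
      have := (htri m).2
      cases hm₀ : c.fromHub m <;> cases hm₁ : c.fromHub (m + 1) <;> simp_all [level]

lemma Config.acyclic_of_isAdmissible {c : Config n} (hc : c.IsAdmissible) (a : Fin (n + 1)) :
    ¬ TransGen c.orientation a a :=
  have ⟨F, hF⟩ := c.exists_potential hc
  not_transGen_self_of_lt F hF a

lemma bijOn_orientation (hn : 3 ≤ n) :
    Set.BijOn Config.orientation {c : Config n | c.IsAdmissible}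
      (acyclicOrientationSet (wheelGraph n)) := by
  refine Set.InvOn.bijOn (f' := toConfig) ⟨fun c _ => toConfig_orientation hn c,
      fun o ho => orientation_toConfig hn (mem_acyclicOrientationSet_iff.1 ho).1⟩
    (fun c hc => mem_acyclicOrientationSet_iff.2
      ⟨c.isOrientation_orientation hn, c.acyclic_of_isAdmissible hc⟩) fun o ho => ?_
  rw [mem_acyclicOrientationSet_iff] at ho
  refine Config.isAdmissible_of_acyclic hn ?_
  rw [orientation_toConfig hn ho.1]
  exact ho.2

end Rim

/- Given `fromHub k`, exactly three values of `(forward k, fromHub (k + 1))` keep the triangle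
(hub, k, k + 1) acyclic; `letter` numbers them, and the decoding functions invert it. -/
def letter : Bool → Bool → Fin 3
  | true, true => 0
  | false, false => 2
  | _, _ => 1

def decodeFromHub : Fin 3 → Bool → Bool
  | 0, _ => true
  | 1, a => a
  | 2, _ => false

def decodeForward : Fin 3 → Bool → Bool
  | 0, _ => true
  | 1, a => !a
  | 2, _ => false

lemma triangle_acyclic_iff (a r b : Bool) :
    (¬ (a ∧ r ∧ b = false) ∧ ¬ (a = false ∧ r = false ∧ b)) ↔
      b = decodeFromHub (letter r b) a ∧ r = decodeForward (letter r b) a := by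
  revert a r b
  decide

lemma letter_decode (ℓ : Fin 3) (a : Bool) :
    letter (decodeForward ℓ a) (decodeFromHub ℓ a) = ℓ := by
  revert ℓ a
  decide

lemma decodeFromHub_eq_of_ne_one {ℓ : Fin 3} (hℓ : ℓ ≠ 1) (a b : Bool) :
    decodeFromHub ℓ a = decodeFromHub ℓ b := by
  revert ℓ a b
  decide

namespace Config

def word (c : Config n) (k : ZMod n) : Fin 3 := letter (c.forward k) (c.fromHub (k + 1))

variable {c : Config n}

lemma trianglesAcyclic_iff : c.TrianglesAcyclic ↔
    ∀ k, c.fromHub (k + 1) = decodeFromHub (c.word k) (c.fromHub k) ∧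
      c.forward k = decodeForward (c.word k) (c.fromHub k) :=
  forall_congr' fun _ => triangle_acyclic_iff _ _ _

end Config

variable [NeZero n]

lemma Config.exists_word_eq_const_iff {c : Config n} (hc : c.TrianglesAcyclic) :
    (∃ ℓ, c.word = const _ ℓ) ↔ ∃ β, c.forward = const _ β := by
  constructor
  · rintro ⟨ℓ, hℓ⟩
    have hdec := fun k => congrFun hℓ k ▸ trianglesAcyclic_iff.1 hc k
    fin_cases ℓ
    · exact ⟨true, funext fun k => (hdec k).2⟩
    · have hconst := ZMod.apply_eq_of_le_add_one (f := c.fromHub) fun k => ((hdec k).1).ge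
      exact ⟨!c.fromHub 0, funext fun k => by rw [(hdec k).2, hconst k 0]; rfl⟩
    · exact ⟨false, funext fun k => (hdec k).2⟩
  · rintro ⟨β, hβ⟩
    have hconst : ∀ k, c.fromHub k = c.fromHub 0 := by
      cases β
      · have hle : ∀ k, c.fromHub (k + 1) ≤ c.fromHub k := fun k =>
          Bool.le_iff_imp.2 fun h => by simpa [congrFun hβ k, h] using (hc k).2
        exact fun k => ZMod.apply_eq_of_le_add_one (f := fun k => OrderDual.toDual (c.fromHub k))
          (fun k => OrderDual.toDual_le_toDual.2 (hle k)) k 0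
      · have hle : ∀ k, c.fromHub k ≤ c.fromHub (k + 1) := fun k =>
          Bool.le_iff_imp.2 fun h => by simpa [congrFun hβ k, h] using (hc k).1
        exact fun k => ZMod.apply_eq_of_le_add_one hle k 0
    exact ⟨letter β (c.fromHub 0), funext fun k => by
      simp [word, congrFun hβ k, hconst (k + 1)]⟩

lemma setOf_isAdmissible : {c : Config n | c.IsAdmissible} =
    {c | c.TrianglesAcyclic ∧ ∀ ℓ, c.word ≠ const _ ℓ} :=
  Set.ext fun _ => and_congr_right fun hc => by
    simpa only [not_exists] using (Config.exists_word_eq_const_iff hc).not.symm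

lemma bijOn_word :
    Set.BijOn Config.word {c : Config n | c.IsAdmissible} {w | ∀ ℓ, w ≠ const _ ℓ} := by
  rw [setOf_isAdmissible]
  refine ⟨fun c hc => hc.2, fun c hc c' hc' hcc' => ?_, fun w hw => ?_⟩
  · obtain ⟨p, hp⟩ := ne_iff.1 (hc.2 1)
    have hdec := Config.trianglesAcyclic_iff.1 hc.1
    have hdec' := Config.trianglesAcyclic_iff.1 hc'.1
    have hfromHub : c.fromHub = c'.fromHub :=
      (ZMod.existsUnique_add_one_eq (fun i => decodeFromHub (c.word i))
        (decodeFromHub_eq_of_ne_one hp)).unique (fun i => (hdec i).1)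
        (fun i => hcc' ▸ (hdec' i).1)
    ext k
    · rw [hfromHub]
    · rw [(hdec k).2, (hdec' k).2, hcc', hfromHub]
  · obtain ⟨p, hp⟩ := ne_iff.1 (hw 1)
    obtain ⟨u, hu⟩ := (ZMod.existsUnique_add_one_eq (fun i => decodeFromHub (w i))
      (decodeFromHub_eq_of_ne_one hp)).exists
    let c : Config n := ⟨u, fun k => decodeForward (w k) (u k)⟩
    have hword : c.word = w := funext fun k => by
      simp only [Config.word, c, hu, letter_decode]
    refine ⟨c, ⟨Config.trianglesAcyclic_iff.2 fun k => ?_, hword ▸ hw⟩, hword⟩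
    rw [hword]
    exact ⟨hu k, rfl⟩

end Wheel

/-- For `n ≥ 3`, the number of acyclic orientations of the wheel graph `W_n` equals
`3^n − 3`. -/
theorem card_acyclicOrientations_wheelGraph (n : ℕ) (hn : 3 ≤ n) :
    (acyclicOrientationSet (wheelGraph n)).ncard = 3 ^ n - 3 := by
  have : NeZero n := ⟨by omega⟩
  rw [← (Wheel.bijOn_orientation hn).ncard_eq, Wheel.bijOn_word.ncard_eq,
    ncard_setOf_forall_ne_const, ZMod.card, Fintype.card_fin]
end

section
/- For every n ≥ 3, the number of acyclic orientations of the wheel graph W_n is at least the number of spanning trees of W_n. -/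
/-!
Label the rim vertices by `ZMod n`, and for a spanning tree `F` let `ForwardToHub F j` say that
`F` reaches the hub from `j` through the rim edges `(j, j + 1), …, (j + k - 1, j + k)` and then the
spoke at `j + k`. Orient the spoke at `j` out of the hub iff `ForwardToHub F j`, and the rim edge
`(j, j + 1)` towards `j + 1` iff `ForwardToHub F (j + 1)` and, should `ForwardToHub F j` hold too,
the edge lies in `F`. As a tree is connected and has no cycle through the hub, these bits
determine `F`. The orientation is induced by a ranking that puts the hub between the rim vertices
with outgoing and with incoming spokes and orders the rim by heights that rise and fall as
prescribed; such heights exist as soon as the rim bits are not all equal. They are all equal only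
for the star, which is sent instead to an orientation with every spoke pointing into the hub,
used by no other tree.
-/

open SimpleGraph

theorem SimpleGraph.IsAcyclic.not_adj_of_injOn {V : Type*} {G : SimpleGraph V}
    (hG : G.IsAcyclic) {f : ℕ → V} {k : ℕ} (hk : 2 ≤ k)
    (hadj : ∀ i < k, G.Adj (f i) (f (i + 1))) (hf : Set.InjOn f (Set.Iic k)) :
    ¬ G.Adj (f 0) (f k) := by
  intro h
  set l := (List.range (k + 1)).map f
  have hne : l ≠ [] := by simp [l]
  have hchain : l.IsChain G.Adj := (List.isChain_map f).2 ((List.isChain_range_succ _ _).2 hadj)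
  let p : G.Walk (f 0) (f k) :=
    (Walk.ofSupport l hne hchain).copy (by simp [l]) (by simp [l, List.getLast_map])
  have hp : p.IsPath := by
    rw [Walk.isPath_def, Walk.support_copy, Walk.support_ofSupport]
    have hIic {a : ℕ} (ha : a ∈ List.range (k + 1)) : a ∈ Set.Iic k :=
      Nat.lt_succ_iff.1 (List.mem_range.1 ha)
    exact List.Nodup.map_on (fun a ha b hb => hf (hIic ha) (hIic hb)) List.nodup_range
  have := congrArg (fun q : G.Path (f 0) (f k) => q.1.length)
    ((hG.subsingleton_path _ _).elim ⟨p, hp⟩ (Path.singleton h))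
  simp [p, l] at this
  omega

theorem mem_acyclicOrientationSet_of_adj_ne {V α : Type*} [LinearOrder α] {G : SimpleGraph V}
    {R : V → α} (hR : ∀ a b, G.Adj a b → R a ≠ R b) :
    (fun a b => G.Adj a b ∧ R a < R b) ∈ acyclicOrientationSet G := by
  refine ⟨fun a b h => h.1, fun a b hab => ?_, fun a h => ?_⟩
  · refine ⟨fun h h' => lt_asymm h.2 h'.2, fun h => ⟨hab, ?_⟩⟩
    exact (hR a b hab).lt_of_le (not_lt.mp fun hba => h ⟨hab.symm, hba⟩)
  · have lt_of_transGen {u v : V}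
        (huv : Relation.TransGen (fun a b => G.Adj a b ∧ R a < R b) u v) : R u < R v := by
      induction huv with
      | single h => exact h.2
      | tail _ h ih => exact ih.trans h.2
    exact lt_irrefl _ (lt_of_transGen h)

theorem lt_iff_and_ne_of_dichotomy {α : Type*} [Preorder α] {a b : α} {P : Prop}
    (h : (P → a < b) ∧ (¬ P → b < a)) : (a < b ↔ P) ∧ a ≠ b := by
  by_cases hP : P
  · exact ⟨iff_of_true (h.1 hP) hP, (h.1 hP).ne⟩
  · exact ⟨iff_of_false (h.2 hP).not_gt hP, (h.2 hP).ne'⟩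

namespace ZMod

variable {n : ℕ} [NeZero n]

theorem exists_not_sub_one_and {P : ZMod n → Prop} (h₁ : ∃ j, P j) (h₀ : ∃ j, ¬ P j) :
    ∃ j, ¬ P (j - 1) ∧ P j := by
  by_contra! h
  obtain ⟨a, ha⟩ := h₀
  have hfalse (k : ℕ) : ¬ P (a + k) := by
    induction k with
    | zero => simpa using ha
    | succ k ih => exact h _ (by rwa [Nat.cast_succ, ← add_assoc, add_sub_cancel_right])
  obtain ⟨b, hb⟩ := h₁
  exact hfalse (b - a).val (by simpa [natCast_zmod_val] using hb)

theorem val_add_one_of_ne_neg_one_s17 {a : ZMod n} (h : a ≠ -1) : (a + 1).val = a.val + 1 := by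
  have hlt : a.val + 1 < n := by
    by_contra! hge
    have hcast := congrArg (Nat.cast : ℕ → ZMod n) (le_antisymm (val_lt a) hge)
    push_cast [natCast_zmod_val, natCast_self] at hcast
    exact h (eq_neg_of_add_eq_zero_left hcast)
  rw [show a + 1 = ((a.val + 1 : ℕ) : ZMod n) by simp, val_cast_of_lt hlt]

theorem exists_heights {δ : ZMod n → Prop} (h₁ : ∃ j, δ j) (h₀ : ∃ j, ¬ δ j) :
    ∃ x : ZMod n → ℤ, ∀ j, (δ j → x j < x (j + 1)) ∧ (¬ δ j → x (j + 1) < x j) := by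
  classical
  obtain ⟨b, hb₀, hb₁⟩ := exists_not_sub_one_and h₁ h₀
  have hn : 1 < n := by
    by_contra! h
    have : (1 : ZMod n) = 0 := one_eq_zero_iff.2 (le_antisymm h (NeZero.pos n))
    exact hb₀ (by rwa [this, sub_zero])
  -- A rise of `n` outweighs the at most `n - 2` descents after it, so `x (b - 1) > x b = 0`.
  let step (i : ℕ) : ℤ := if δ (b + i) then n else -1
  let x (j : ZMod n) : ℤ := ∑ i ∈ Finset.range (j - b).val, step i
  have hwrap : 0 < x (b - 1) := by
    have hval : (b - 1 - b).val = (n - 2) + 1 := by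
      rw [show b - 1 - b = ((n - 1 : ℕ) : ZMod n) by
        rw [Nat.cast_sub hn.le, natCast_self, Nat.cast_one]; ring, val_cast_of_lt (by omega)]
      omega
    have hstep (i : ℕ) : -1 ≤ step (i + 1) := by
      simp only [step]; split_ifs <;> omega
    have hrest : -((n - 2 : ℕ) : ℤ) ≤ ∑ i ∈ Finset.range (n - 2), step (i + 1) := by
      simpa using Finset.card_nsmul_le_sum (Finset.range (n - 2)) _ _ fun i _ => hstep i
    have hfirst : step 0 = n := by simp [step, hb₁]
    simp only [x, hval, Finset.sum_range_succ', hfirst]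
    omega
  refine ⟨x, fun j => ?_⟩
  by_cases hj : j = b - 1
  · subst hj
    exact ⟨fun h => absurd h hb₀, fun _ => by simpa [x] using hwrap⟩
  · have hx : x (j + 1) = x j + step (j - b).val := by
      have hne : j - b ≠ -1 := fun h => hj (by linear_combination h)
      simp only [x, show j + 1 - b = j - b + 1 by ring, val_add_one_of_ne_neg_one_s17 hne,
        Finset.sum_range_succ]
    have hb : b + (((j - b).val : ℕ) : ZMod n) = j := by simp
    simp only [hx, step, hb]
    exact ⟨fun h => by simp [h]; omega, fun h => by simp [h]⟩

end ZMod

section Wheel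

variable {n : ℕ} [NeZero n]

def rim (j : ZMod n) : Fin (n + 1) := ⟨j.val + 1, Nat.succ_lt_succ (ZMod.val_lt j)⟩

def rimIndex (v : Fin (n + 1)) : ZMod n := (v.val : ZMod n) - 1

lemma rim_ne_zero (j : ZMod n) : rim j ≠ 0 := by simp [rim, Fin.ext_iff]

lemma rim_injective : Function.Injective (rim (n := n)) :=
  fun a b h => ZMod.val_injective n (by simpa [rim, Fin.ext_iff] using h)

lemma natCast_val_rim (j : ZMod n) : ((rim j).val : ZMod n) = j + 1 := by
  simp [rim]

lemma rimIndex_rim (j : ZMod n) : rimIndex (rim j) = j := by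
  simp [rimIndex, natCast_val_rim]

lemma rim_rimIndex {v : Fin (n + 1)} (hv : v ≠ 0) : rim (rimIndex v) = v := by
  have hpos : 0 < v.val := Nat.pos_of_ne_zero fun h => hv (Fin.ext h)
  have : rimIndex v = ((v.val - 1 : ℕ) : ZMod n) := by simp [rimIndex, Nat.cast_sub hpos]
  ext
  rw [this, rim, Fin.val_mk, ZMod.val_cast_of_lt (by omega)]
  omega

lemma wheelGraph_adj_zero_rim (j : ZMod n) : (wheelGraph n).Adj 0 (rim j) := by
  rw [wheelGraph, fromRel_adj]
  exact ⟨(rim_ne_zero j).symm, Or.inl (Or.inl rfl)⟩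

lemma wheelGraph_adj_rim_add_one (hn : 1 < n) (j : ZMod n) :
    (wheelGraph n).Adj (rim j) (rim (j + 1)) := by
  rw [wheelGraph, fromRel_adj, natCast_val_rim, natCast_val_rim]
  refine ⟨fun h => ?_, Or.inr (Or.inr rfl)⟩
  have : (1 : ZMod n) = 0 := by linear_combination -rim_injective h
  exact hn.ne' (ZMod.one_eq_zero_iff.1 this)

lemma eq_zero_or_eq_rim_of_wheelGraph_adj {j : ZMod n} {w : Fin (n + 1)}
    (h : (wheelGraph n).Adj (rim j) w) : w = 0 ∨ w = rim (j + 1) ∨ w = rim (j - 1) := by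
  by_cases hw : w = 0
  · exact Or.inl hw
  rw [← rim_rimIndex hw] at h ⊢
  rw [wheelGraph, fromRel_adj, natCast_val_rim, natCast_val_rim] at h
  rcases h.2 with (h | h) | (h | h)
  · exact absurd h (rim_ne_zero j)
  · exact Or.inr (Or.inr (congrArg rim (by linear_combination -h)))
  · exact absurd h (rim_ne_zero _)
  · exact Or.inr (Or.inl (congrArg rim (by linear_combination h)))

lemma wheelGraph_adj_induction {Q : Fin (n + 1) → Fin (n + 1) → Prop}
    (hsymm : ∀ a b, Q a b → Q b a) (hhub : ∀ j, Q 0 (rim j))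
    (hrim : ∀ j, Q (rim j) (rim (j + 1))) {a b : Fin (n + 1)} (h : (wheelGraph n).Adj a b) :
    Q a b := by
  by_cases ha : a = 0
  · subst ha
    rw [← rim_rimIndex h.ne']
    exact hhub _
  rw [← rim_rimIndex ha] at h ⊢
  rcases eq_zero_or_eq_rim_of_wheelGraph_adj h with rfl | rfl | rfl
  · exact hsymm _ _ (hhub _)
  · exact hrim _
  · simpa using hsymm _ _ (hrim (rimIndex a - 1))

lemma wheelGraph_edge_cases {e : Sym2 (Fin (n + 1))} (he : e ∈ (wheelGraph n).edgeSet) :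
    (∃ j, e = s(0, rim j)) ∨ ∃ j, e = s(rim j, rim (j + 1)) := by
  induction e using Sym2.ind with
  | h a b =>
    refine wheelGraph_adj_induction (Q := fun a b => (∃ j, s(a, b) = s(0, rim j)) ∨
      ∃ j, s(a, b) = s(rim j, rim (j + 1))) (fun a b => ?_) (fun j => .inl ⟨j, rfl⟩)
      (fun j => .inr ⟨j, rfl⟩) he
    intro h
    rwa [Sym2.eq_swap (a := b)]

end Wheel

section Tree

variable {n : ℕ} [NeZero n] {F : Set (Sym2 (Fin (n + 1)))}

variable (F) in
def RimRun (j : ZMod n) (k : ℕ) : Prop :=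
  ∀ m < k, s(rim (j + (m : ZMod n)), rim (j + (m : ZMod n) + 1)) ∈ F

variable (F) in
def ForwardToHub (j : ZMod n) : Prop :=
  ∃ k < n, RimRun F j k ∧ s(0, rim (j + (k : ZMod n))) ∈ F

lemma RimRun.mono {j : ZMod n} {k l : ℕ} (h : RimRun F j k) (hlk : l ≤ k) : RimRun F j l :=
  fun m hm => h m (hm.trans_le hlk)

lemma rimRun_succ_iff_left {j : ZMod n} {k : ℕ} :
    RimRun F j (k + 1) ↔ s(rim j, rim (j + 1)) ∈ F ∧ RimRun F (j + 1) k := by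
  have hshift (m : ℕ) : j + ((m + 1 : ℕ) : ZMod n) = j + 1 + m := by push_cast; ring
  simp only [RimRun, Nat.forall_lt_succ_left, Nat.cast_zero, add_zero, hshift]

lemma rimRun_succ_iff_right {j : ZMod n} {k : ℕ} :
    RimRun F j (k + 1) ↔ RimRun F j k ∧ s(rim (j + (k : ZMod n)), rim (j + (k : ZMod n) + 1)) ∈ F :=
  Nat.forall_lt_succ_right

lemma RimRun.forall_mem {j : ZMod n} (h : RimRun F j n) (i : ZMod n) :
    s(rim i, rim (i + 1)) ∈ F := by
  simpa using h (i - j).val (ZMod.val_lt _)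

lemma forwardToHub_of_mem {j : ZMod n} (h : s(0, rim j) ∈ F) : ForwardToHub F j :=
  ⟨0, NeZero.pos n, fun _ hm => absurd hm (Nat.not_lt_zero _), by simpa using h⟩

lemma rim_add_natCast_injOn (j : ZMod n) :
    Set.InjOn (fun m : ℕ => rim (j + (m : ZMod n))) (Set.Iio n) :=
  fun a ha b hb h => by
    simpa [ZMod.val_cast_of_lt ha, ZMod.val_cast_of_lt hb] using
      congrArg ZMod.val (add_left_cancel (rim_injective h))

lemma fromEdgeSet_adj_rim (hn : 1 < n) {j : ZMod n} (h : s(rim j, rim (j + 1)) ∈ F) :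
    (fromEdgeSet F).Adj (rim j) (rim (j + 1)) :=
  (fromEdgeSet_adj F).2 ⟨h, (wheelGraph_adj_rim_add_one hn j).ne⟩

lemma not_forall_rim_mem (hn : 3 ≤ n) (hF : (fromEdgeSet F).IsAcyclic) :
    ¬ ∀ j : ZMod n, s(rim j, rim (j + 1)) ∈ F := by
  intro hall
  have hlast : ((n - 1 : ℕ) : ZMod n) = -1 := by
    rw [Nat.cast_sub (by omega), ZMod.natCast_self, Nat.cast_one, zero_sub]
  refine hF.not_adj_of_injOn (f := fun m : ℕ => rim (0 + (m : ZMod n))) (k := n - 1) (by omega)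
    (fun i _ => by simpa using fromEdgeSet_adj_rim (by omega) (hall i))
    ((rim_add_natCast_injOn 0).mono fun m hm => by simp at hm ⊢; omega) ?_
  simpa [hlast] using (fromEdgeSet_adj_rim (by omega) (hall (-1))).symm

lemma spoke_not_mem_of_rimRun (hF : (fromEdgeSet F).IsAcyclic) {j : ZMod n} {k : ℕ}
    (hk : 0 < k) (hkn : k < n) (hrun : RimRun F j k) (hj : s(0, rim j) ∈ F) :
    s(0, rim (j + (k : ZMod n))) ∉ F := by
  intro hjk
  have hspoke {i : ZMod n} (h : s(0, rim i) ∈ F) : (fromEdgeSet F).Adj (rim i) 0 :=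
    (fromEdgeSet_adj F).2 ⟨by rwa [Sym2.eq_swap], rim_ne_zero i⟩
  refine hF.not_adj_of_injOn (f := fun m => if m ≤ k then rim (j + (m : ZMod n)) else 0)
    (k := k + 1) (by omega) (fun i hi => ?_) (fun a ha b hb hab => ?_) (by simpa using hspoke hj)
  · rcases Nat.lt_succ_iff_lt_or_eq.1 hi with hi | rfl
    · simpa [hi.le, Nat.succ_le_of_lt hi, ← add_assoc] using
        fromEdgeSet_adj_rim (by omega) (hrun i hi)
    · simpa using hspoke hjk
  · simp only [Set.mem_Iic] at ha hb
    simp only at hab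
    split_ifs at hab with h₁ h₂ h₂
    · exact rim_add_natCast_injOn j (by simp; omega) (by simp; omega) hab
    · exact absurd hab (rim_ne_zero _)
    · exact absurd hab.symm (rim_ne_zero _)
    · omega

variable (F) in
def forwardReach (j : ZMod n) : Set (Fin (n + 1)) :=
  {v | ∃ m < n, RimRun F j m ∧ v = rim (j + (m : ZMod n))}

lemma mem_forwardReach_of_mem (hsub : F ⊆ (wheelGraph n).edgeSet) {i : ZMod n}
    (hi : ¬ ForwardToHub F i) (hprev : s(rim (i - 1), rim i) ∉ F) {v w : Fin (n + 1)}
    (hv : v ∈ forwardReach F i) (hvw : s(v, w) ∈ F) : w ∈ forwardReach F i := by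
  obtain ⟨m, hmn, hrun, rfl⟩ := hv
  rcases eq_zero_or_eq_rim_of_wheelGraph_adj (hsub hvw) with rfl | rfl | rfl
  · exact (hi ⟨m, hmn, hrun, by rwa [Sym2.eq_swap]⟩).elim
  · by_cases hm : m + 1 < n
    · exact ⟨m + 1, hm, rimRun_succ_iff_right.2 ⟨hrun, hvw⟩, by push_cast; ring_nf⟩
    · have hlast : i + (m : ZMod n) = i - 1 := by
        rw [show m = n - 1 by omega, Nat.cast_sub (by omega), ZMod.natCast_self, Nat.cast_one]
        ring
      rw [hlast, sub_add_cancel] at hvw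
      exact (hprev hvw).elim
  · rcases m with _ | m
    · rw [Sym2.eq_swap] at hvw
      exact (hprev (by simpa using hvw)).elim
    · exact ⟨m, by omega, hrun.mono m.le_succ, by push_cast; ring_nf⟩

lemma rim_mem_of_not_forwardToHub (hsub : F ⊆ (wheelGraph n).edgeSet)
    (hconn : (fromEdgeSet F).Connected) {j : ZMod n} (h : ¬ ForwardToHub F (j + 1)) :
    s(rim j, rim (j + 1)) ∈ F := by
  by_contra hr
  have hstart : rim (j + 1) ∈ forwardReach F (j + 1) :=
    ⟨0, NeZero.pos n, fun _ hm => absurd hm (Nat.not_lt_zero _), by simp⟩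
  have hhub : (0 : Fin (n + 1)) ∉ forwardReach F (j + 1) :=
    fun ⟨_, _, _, h⟩ => rim_ne_zero _ h.symm
  obtain ⟨d, -, hd, hd'⟩ :=
    (hconn.preconnected (rim (j + 1)) 0).some.exists_boundary_dart _ hstart hhub
  exact hd' (mem_forwardReach_of_mem hsub h (by rwa [add_sub_cancel_right]) hd
    ((fromEdgeSet_adj F).1 d.adj).1)

lemma exists_rimRun_of_forwardToHub_add_one (hn : 3 ≤ n) (hF : (fromEdgeSet F).IsAcyclic)
    {j : ZMod n} (hr : s(rim j, rim (j + 1)) ∈ F) (h : ForwardToHub F (j + 1)) :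
    ∃ k, 0 < k ∧ k < n ∧ RimRun F j k ∧ s(0, rim (j + (k : ZMod n))) ∈ F := by
  obtain ⟨k, -, hrun, hk⟩ := h
  have hrun' : RimRun F j (k + 1) := rimRun_succ_iff_left.2 ⟨hr, hrun⟩
  have hlt : k + 1 < n := by
    by_contra! hge
    exact not_forall_rim_mem hn hF (hrun'.mono hge).forall_mem
  exact ⟨k + 1, k.succ_pos, hlt, hrun', by rwa [Nat.cast_succ, add_comm (k : ZMod n), ← add_assoc]⟩

end Tree

section WheelCode

variable {n : ℕ}

/-- `out j`: the spoke at `j` points away from the hub; `fwd j`: the rim edge `(j, j + 1)` points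
to `j + 1`. -/
@[ext]
structure WheelCode (n : ℕ) where
  out : ZMod n → Prop
  fwd : ZMod n → Prop

def WheelCode.IsValid (c : WheelCode n) : Prop :=
  (∀ j, ¬ (c.out j ↔ c.out (j + 1)) → (c.fwd j ↔ c.out (j + 1))) ∧
    (∃ j, c.fwd j) ∧ ∃ j, ¬ c.fwd j

variable (n) in
def starCode : WheelCode n := ⟨fun _ => False, fun j => j = 0⟩

lemma starCode_isValid (hn : 1 < n) : (starCode n).IsValid :=
  ⟨fun _ h => (h Iff.rfl).elim, ⟨0, rfl⟩, ⟨1, fun h => hn.ne' (ZMod.one_eq_zero_iff.1 h)⟩⟩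

end WheelCode

section Code

variable {n : ℕ} [NeZero n] {F : Set (Sym2 (Fin (n + 1)))}

variable (F) in
def treeCode : WheelCode n where
  out := ForwardToHub F
  fwd j := ForwardToHub F (j + 1) ∧ (ForwardToHub F j → s(rim j, rim (j + 1)) ∈ F)

lemma spoke_mem_iff (hn : 3 ≤ n) (hF : F ∈ spanningTreeSet (wheelGraph n)) {j : ZMod n} :
    s(0, rim j) ∈ F ↔ (treeCode F).out j ∧ ¬ (treeCode F).fwd j := by
  simp only [treeCode]
  constructor
  · intro hs
    refine ⟨forwardToHub_of_mem hs, fun ⟨h₁, hr⟩ => ?_⟩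
    obtain ⟨k, hk, hkn, hrun, hks⟩ := exists_rimRun_of_forwardToHub_add_one hn hF.2.isAcyclic
      (hr (forwardToHub_of_mem hs)) h₁
    exact spoke_not_mem_of_rimRun hF.2.isAcyclic hk hkn hrun hs hks
  · rintro ⟨⟨k, hkn, hrun, hks⟩, hnot⟩
    rcases k with _ | k
    · simpa using hks
    · obtain ⟨hr, hrun'⟩ := rimRun_succ_iff_left.1 hrun
      refine (hnot ⟨⟨k, by omega, hrun', ?_⟩, fun _ => hr⟩).elim
      rwa [Nat.cast_succ, add_comm (k : ZMod n), ← add_assoc] at hks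

lemma rim_mem_iff (hn : 3 ≤ n) (hF : F ∈ spanningTreeSet (wheelGraph n)) {j : ZMod n} :
    s(rim j, rim (j + 1)) ∈ F ↔
      ¬ (treeCode F).out (j + 1) ∨ ((treeCode F).out j ∧ (treeCode F).fwd j) := by
  simp only [treeCode]
  constructor
  · intro hr
    by_cases h₁ : ForwardToHub F (j + 1)
    · obtain ⟨k, -, hkn, hrun, hks⟩ :=
        exists_rimRun_of_forwardToHub_add_one hn hF.2.isAcyclic hr h₁
      exact Or.inr ⟨⟨k, hkn, hrun, hks⟩, h₁, fun _ => hr⟩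
    · exact Or.inl h₁
  · rintro (h | ⟨h₀, -, h⟩)
    · exact rim_mem_of_not_forwardToHub hF.1 hF.2.connected h
    · exact h h₀

lemma eq_of_forall_spoke_rim_mem_iff {F' : Set (Sym2 (Fin (n + 1)))}
    (hF : F ⊆ (wheelGraph n).edgeSet) (hF' : F' ⊆ (wheelGraph n).edgeSet)
    (hspoke : ∀ j, s(0, rim j) ∈ F ↔ s(0, rim j) ∈ F')
    (hrim : ∀ j, s(rim j, rim (j + 1)) ∈ F ↔ s(rim j, rim (j + 1)) ∈ F') : F = F' := by
  have subset {F F' : Set (Sym2 (Fin (n + 1)))} (hF : F ⊆ (wheelGraph n).edgeSet)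
      (hspoke : ∀ j, s(0, rim j) ∈ F → s(0, rim j) ∈ F')
      (hrim : ∀ j, s(rim j, rim (j + 1)) ∈ F → s(rim j, rim (j + 1)) ∈ F') : F ⊆ F' := by
    intro e he
    rcases wheelGraph_edge_cases (hF he) with ⟨j, rfl⟩ | ⟨j, rfl⟩
    exacts [hspoke j he, hrim j he]
  exact (subset hF (hspoke · |>.1) (hrim · |>.1)).antisymm
    (subset hF' (hspoke · |>.2) (hrim · |>.2))

lemma treeCode_injOn (hn : 3 ≤ n) : Set.InjOn treeCode (spanningTreeSet (wheelGraph n)) :=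
  fun F hF F' hF' h => eq_of_forall_spoke_rim_mem_iff hF.1 hF'.1
    (fun j => by rw [spoke_mem_iff hn hF, spoke_mem_iff hn hF', h])
    (fun j => by rw [rim_mem_iff hn hF, rim_mem_iff hn hF', h])

lemma exists_forwardToHub (hn : 3 ≤ n) (hF : F ∈ spanningTreeSet (wheelGraph n)) :
    ∃ j, ForwardToHub F j := by
  obtain ⟨j, hj⟩ := not_forall.1 (not_forall_rim_mem hn hF.2.isAcyclic)
  exact ⟨j + 1, by_contra fun h => hj (rim_mem_of_not_forwardToHub hF.1 hF.2.connected h)⟩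

variable (n) in
def starTree : Set (Sym2 (Fin (n + 1))) := Set.range fun j : ZMod n => s(0, rim j)

lemma starTree_subset : starTree n ⊆ (wheelGraph n).edgeSet := by
  rintro _ ⟨j, rfl⟩
  exact wheelGraph_adj_zero_rim j

lemma treeCode_fwd_nonconstant (hn : 3 ≤ n) (hF : F ∈ spanningTreeSet (wheelGraph n))
    (hstar : F ≠ starTree n) : (∃ j, (treeCode F).fwd j) ∧ ∃ j, ¬ (treeCode F).fwd j := by
  by_cases hall : ∀ j, ForwardToHub F j
  · have hfwd (j : ZMod n) : (treeCode F).fwd j ↔ s(rim j, rim (j + 1)) ∈ F := by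
      simp [treeCode, hall]
    simp only [hfwd]
    refine ⟨by_contra fun hnone => hstar ?_, not_forall.1 (not_forall_rim_mem hn hF.2.isAcyclic)⟩
    push Not at hnone
    refine eq_of_forall_spoke_rim_mem_iff hF.1 starTree_subset (fun j => ?_) (fun j => ?_)
    · simp only [spoke_mem_iff hn hF, hfwd, hnone, not_false_eq_true, and_true]
      exact iff_of_true (hall j) ⟨j, rfl⟩
    · refine iff_of_false (hnone j) ?_
      rintro ⟨i, hi⟩
      rcases Sym2.eq_iff.1 hi with ⟨h, -⟩ | ⟨h, -⟩
      exacts [rim_ne_zero j h.symm, rim_ne_zero (j + 1) h.symm]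
  · push Not at hall
    obtain ⟨a, ha⟩ := exists_forwardToHub hn hF
    obtain ⟨b, hb₀, hb₁⟩ := ZMod.exists_not_sub_one_and ⟨a, ha⟩ hall
    obtain ⟨c, -, hc₁⟩ :=
      ZMod.exists_not_sub_one_and (P := fun j => ¬ ForwardToHub F j) hall ⟨a, not_not.2 ha⟩
    exact ⟨⟨b - 1, by simp [treeCode, hb₀, hb₁]⟩, ⟨c - 1, by simp [treeCode, hc₁]⟩⟩

lemma treeCode_isValid (hn : 3 ≤ n) (hF : F ∈ spanningTreeSet (wheelGraph n))
    (hstar : F ≠ starTree n) : (treeCode F).IsValid :=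
  ⟨fun j h => by simp only [treeCode] at h ⊢; tauto, treeCode_fwd_nonconstant hn hF hstar⟩

lemma treeCode_ne_starCode (hn : 3 ≤ n) (hF : F ∈ spanningTreeSet (wheelGraph n)) :
    treeCode F ≠ starCode n := fun h => by
  obtain ⟨j, hj⟩ := exists_forwardToHub hn hF
  exact (congrArg (·.out j) h).mp hj

open Classical in
noncomputable def wheelCode (F : Set (Sym2 (Fin (n + 1)))) : WheelCode n :=
  if F = starTree n then starCode n else treeCode F

lemma wheelCode_injOn (hn : 3 ≤ n) : Set.InjOn wheelCode (spanningTreeSet (wheelGraph n)) := by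
  intro F hF F' hF' h
  unfold wheelCode at h
  split_ifs at h with h₁ h₂ h₂
  · rw [h₁, h₂]
  · exact (treeCode_ne_starCode hn hF' h.symm).elim
  · exact (treeCode_ne_starCode hn hF h).elim
  · exact treeCode_injOn hn hF hF' h

lemma wheelCode_isValid (hn : 3 ≤ n) (hF : F ∈ spanningTreeSet (wheelGraph n)) :
    (wheelCode F).IsValid := by
  unfold wheelCode
  split_ifs with hstar
  exacts [starCode_isValid (by omega), treeCode_isValid hn hF hstar]

end Code

section Orientation

variable {n : ℕ} [NeZero n]

def readCode (o : Fin (n + 1) → Fin (n + 1) → Prop) : WheelCode n :=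
  ⟨fun j => o 0 (rim j), fun j => o (rim j) (rim (j + 1))⟩

lemma exists_rank {c : WheelCode n} (hc : c.IsValid) :
    ∃ R : Fin (n + 1) → ℕ ×ₗ ℤ,
      (∀ j, (c.out j → R 0 < R (rim j)) ∧ (¬ c.out j → R (rim j) < R 0)) ∧
      ∀ j, (c.fwd j → R (rim j) < R (rim (j + 1))) ∧ (¬ c.fwd j → R (rim (j + 1)) < R (rim j)) := by
  classical
  obtain ⟨hcross, h₁, h₀⟩ := hc
  obtain ⟨x, hx⟩ := ZMod.exists_heights h₁ h₀
  let level (j : ZMod n) : ℕ := if c.out j then 2 else 0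
  refine ⟨fun v => if v = 0 then toLex (1, 0) else toLex (level (rimIndex v), x (rimIndex v)),
    fun j => ?_, fun j => ?_⟩
  · simp only [rim_ne_zero, if_true, if_false, rimIndex_rim, Prod.Lex.toLex_lt_toLex, level]
    constructor <;> intro h <;> simp [h]
  · simp only [rim_ne_zero, if_false, rimIndex_rim, Prod.Lex.toLex_lt_toLex, level]
    by_cases hsame : c.out j ↔ c.out (j + 1)
    · simp only [hsame, lt_self_iff_false, true_and, false_or]
      exact hx j
    · have := hcross j hsame
      by_cases h : c.out (j + 1) <;> simp_all

theorem exists_mem_acyclicOrientationSet_readCode_eq (hn : 1 < n) {c : WheelCode n}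
    (hc : c.IsValid) : ∃ o ∈ acyclicOrientationSet (wheelGraph n), readCode o = c := by
  obtain ⟨R, hhub, hrim⟩ := exists_rank hc
  refine ⟨_, mem_acyclicOrientationSet_of_adj_ne (R := R) fun a b hab => ?_, ?_⟩
  · exact wheelGraph_adj_induction (Q := fun a b => R a ≠ R b) (fun _ _ h => h.symm)
      (fun j => (lt_iff_and_ne_of_dichotomy (hhub j)).2)
      (fun j => (lt_iff_and_ne_of_dichotomy (hrim j)).2) hab
  · ext j
    · simp [readCode, wheelGraph_adj_zero_rim, (lt_iff_and_ne_of_dichotomy (hhub j)).1]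
    · simp [readCode, wheelGraph_adj_rim_add_one hn, (lt_iff_and_ne_of_dichotomy (hrim j)).1]

end Orientation

/-- For `n ≥ 3`, the wheel graph `W_n` has at least as many acyclic orientations as
spanning trees. -/
theorem card_spanningTrees_le_card_acyclicOrientations_wheelGraph (n : ℕ) (hn : 3 ≤ n) :
    (spanningTreeSet (wheelGraph n)).ncard ≤
      (acyclicOrientationSet (wheelGraph n)).ncard := by
  have : NeZero n := ⟨by omega⟩
  have hcodes : wheelCode '' spanningTreeSet (wheelGraph n) ⊆
      readCode '' acyclicOrientationSet (wheelGraph n) := by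
    rintro _ ⟨F, hF, rfl⟩
    exact exists_mem_acyclicOrientationSet_readCode_eq (by omega) (wheelCode_isValid hn hF)
  calc (spanningTreeSet (wheelGraph n)).ncard
      = (wheelCode '' spanningTreeSet (wheelGraph n)).ncard :=
        (wheelCode_injOn hn).ncard_image.symm
    _ ≤ (readCode '' acyclicOrientationSet (wheelGraph n)).ncard :=
        Set.ncard_le_ncard hcodes ((Set.toFinite _).image _)
    _ ≤ (acyclicOrientationSet (wheelGraph n)).ncard := Set.ncard_image_le (Set.toFinite _)
end

section
/- For every n ≥ 4, the number of strongly connected tournaments on a fixed set of n labelled vertices is at least n^(n−2). (Equivalently, the number of totally cyclic orientations of the complete graph K_n is at least its number of spanning trees, n^(n−2).) -/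
open Relation


def pat : Fin 6 → Fin 3 → Bool :=
  ![![false,false,true], ![false,true,false], ![false,true,true],
    ![true,false,false], ![true,false,true], ![true,true,false]]

lemma pat_inj : Function.Injective pat := by decide
lemma pat_exists_true : ∀ t, ∃ c, pat t c = true := by decide
lemma pat_exists_false : ∀ t, ∃ c, pat t c = false := by decide

def toProp (n : ℕ) (m : Fin n → Fin n → Bool) : Fin n → Fin n → Prop :=
  fun a b => m a b = true

abbrev D (k : ℕ) := ∀ j : Fin k, Fin 6 × (Fin j.val → Bool)

def cV {k : ℕ} (c : Fin 3) : Fin (k+3) := ⟨c.val, by omega⟩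
def oV {k : ℕ} (j : Fin k) : Fin (k+3) := ⟨j.val + 3, by omega⟩

def M (k : ℕ) (d : D k) (a b : Fin (k+3)) : Bool :=
  if hab : a.val = b.val then false
  else if ha : a.val < 3 then
    if hb : b.val < 3 then decide ((a.val+1) % 3 = b.val)
    else pat (d ⟨b.val-3, by have := b.isLt; omega⟩).1 ⟨a.val, ha⟩
  else if hb : b.val < 3 then
    !pat (d ⟨a.val-3, by have := a.isLt; omega⟩).1 ⟨b.val, hb⟩
  else if hij : a.val < b.val then
    (d ⟨b.val-3, by have := b.isLt; omega⟩).2 ⟨a.val-3, by show a.val - 3 < b.val - 3; omega⟩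
  else
    !(d ⟨a.val-3, by have := a.isLt; omega⟩).2 ⟨b.val-3, by show b.val - 3 < a.val - 3; omega⟩

lemma M_irrefl {k d} (a : Fin (k+3)) : M k d a a = false := by
  simp [M]

lemma M_core_outer {k d} (c : Fin 3) (j : Fin k) :
    M k d (cV c) (oV j) = pat (d j).1 c := by
  have hc := c.isLt
  unfold M cV oV
  rw [dif_neg (by simp; omega), dif_pos (by simpa using hc), dif_neg (by simp)]
  rfl

lemma M_outer_core {k d} (j : Fin k) (c : Fin 3) :
    M k d (oV j) (cV c) = !pat (d j).1 c := by
  have hc := c.isLt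
  unfold M cV oV
  rw [dif_neg (by simp; omega), dif_neg (by simp), dif_pos (by simpa using hc)]
  rfl

lemma M_outer_outer {k d} {i j : Fin k} (hij : i.val < j.val) :
    M k d (oV i) (oV j) = (d j).2 ⟨i.val, hij⟩ := by
  unfold M oV
  rw [dif_neg (by simp; omega), dif_neg (by simp), dif_neg (by simp), dif_pos (by simpa using hij)]
  rfl

lemma M_antisymm {k d} {a b : Fin (k+3)} (hab : a ≠ b) :
    M k d a b = !M k d b a := by
  have hab' : a.val ≠ b.val := fun h => hab (Fin.ext h)
  unfold M
  split_ifs with h1 h2 h3 h4 h5 h6 h7 h8 h9 h10 h11 h12 h13 h14 h15 <;>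
    first
    | omega
    | simp
    | (simp only [← decide_not]; exact decide_eq_decide.mpr (by omega))

lemma core_edge {k d} (c c' : Fin 3) (h : (c.val+1)%3 = c'.val) :
    M k d (cV c) (cV c') = true := by
  have hc := c.isLt
  have hc' := c'.isLt
  unfold M cV
  rw [dif_neg (by simp; omega), dif_pos (by simpa using hc), dif_pos (by simpa using hc')]
  simpa using h

lemma core_reach {k d} (x y : Fin 3) :
    ReflTransGen (fun a b => M k d a b = true) (cV x) (cV y) := by
  set o := fun a b => M k d a b = true with ho
  have e01 : o (cV 0) (cV 1) := core_edge (d := d) 0 1 (by norm_num)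
  have e12 : o (cV 1) (cV 2) := core_edge (d := d) 1 2 (by norm_num)
  have e20 : o (cV 2) (cV 0) := core_edge (d := d) 2 0 (by norm_num)
  fin_cases x <;> fin_cases y
  · exact .refl
  · exact .single e01
  · exact (ReflTransGen.single e01).tail e12
  · exact (ReflTransGen.single e12).tail e20
  · exact .refl
  · exact .single e12
  · exact .single e20
  · exact (ReflTransGen.single e20).tail e01
  · exact .refl

lemma exists_core_out {k d} (j : Fin k) : ∃ c : Fin 3, M k d (cV c) (oV j) = true := by
  obtain ⟨c, hc⟩ := pat_exists_true (d j).1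
  exact ⟨c, by rw [M_core_outer]; exact hc⟩

lemma exists_core_in {k d} (j : Fin k) : ∃ c : Fin 3, M k d (oV j) (cV c) = true := by
  obtain ⟨c, hc⟩ := pat_exists_false (d j).1
  exact ⟨c, by rw [M_outer_core, hc]; rfl⟩

lemma classify {k : ℕ} (a : Fin (k+3)) : (∃ c : Fin 3, a = cV c) ∨ (∃ j : Fin k, a = oV j) := by
  have := a.isLt
  by_cases h : a.val < 3
  · exact .inl ⟨⟨a.val, h⟩, Fin.ext rfl⟩
  · exact .inr ⟨⟨a.val - 3, by omega⟩, Fin.ext (show a.val = a.val - 3 + 3 by omega)⟩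

lemma M_strong {k : ℕ} (d : D k) (a b : Fin (k+3)) :
    ReflTransGen (fun a b => M k d a b = true) a b := by
  have reach_core : ∀ (a : Fin (k+3)) (c : Fin 3),
      ReflTransGen (fun a b => M k d a b = true) a (cV c) := by
    intro a c
    rcases classify a with ⟨c', rfl⟩ | ⟨j, rfl⟩
    · exact core_reach c' c
    · obtain ⟨c', h⟩ := exists_core_in j
      exact ReflTransGen.trans (ReflTransGen.single (r := fun a b => M k d a b = true) h) (core_reach c' c)
  rcases classify b with ⟨c, rfl⟩ | ⟨j, rfl⟩
  · exact reach_core a c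
  · obtain ⟨c, h⟩ := exists_core_out j
    exact (reach_core a c).tail h

lemma toProp_inj {n : ℕ} : Function.Injective (toProp n) := by
  intro m m' h
  funext a b
  have := congrFun (congrFun h a) b
  simp only [toProp, eq_iff_iff] at this
  rcases Bool.eq_false_or_eq_true (m a b) with h1 | h1 <;>
  rcases Bool.eq_false_or_eq_true (m' a b) with h2 | h2 <;> simp_all

lemma M_inj {k : ℕ} : Function.Injective (fun d : D k => M k d) := by
  intro d d' h
  simp only at h
  funext j
  have h1 : (d j).1 = (d' j).1 := by
    apply pat_inj
    funext c
    calc pat (d j).1 c = M k d (cV c) (oV j) := (M_core_outer c j).symm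
      _ = M k d' (cV c) (oV j) := by rw [h]
      _ = pat (d' j).1 c := M_core_outer c j
  have h2 : (d j).2 = (d' j).2 := by
    funext i
    have hik : i.val < k := lt_trans i.isLt j.isLt
    have hij : (⟨i.val, hik⟩ : Fin k).val < j.val := i.isLt
    calc (d j).2 i = (d j).2 ⟨i.val, hij⟩ := rfl
      _ = M k d (oV ⟨i.val, hik⟩) (oV j) := (M_outer_outer hij).symm
      _ = M k d' (oV ⟨i.val, hik⟩) (oV j) := by rw [h]
      _ = (d' j).2 ⟨i.val, hij⟩ := M_outer_outer hij
      _ = (d' j).2 i := rfl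
  exact Prod.ext h1 h2

lemma card_D (k : ℕ) : Nat.card (D k) = 6^k * 2^(k*(k-1)/2) := by
  rw [Nat.card_eq_fintype_card, Fintype.card_pi]
  have heach : ∀ j : Fin k, Fintype.card (Fin 6 × (Fin j.val → Bool)) = 6 * 2^j.val := by
    intro j; simp [Fintype.card_fun]
  rw [Finset.prod_congr rfl (fun j _ => heach j), Finset.prod_mul_distrib,
    Finset.prod_const, Finset.prod_pow_eq_pow_sum]
  congr 1
  · simp
  · rw [Fin.sum_univ_eq_sum_range (fun i => i), Finset.sum_range_id]

lemma sq_bound : ∀ m, 6 ≤ m → (m+3)^2 ≤ 2^(m+2) := by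
  intro m hm
  induction m, hm using Nat.le_induction with
  | base => norm_num
  | succ m hm ih =>
    have h2 : 2^(m+1+2) = 2 * 2^(m+2) := by ring
    nlinarith [ih, hm]

lemma arith (k : ℕ) (hk : 3 ≤ k) : (k+3)^(k+1) ≤ 6^k * 2^(k*(k-1)/2) := by
  rcases Nat.lt_or_ge k 6 with h | h
  · interval_cases k <;> norm_num
  · have hsq : ((k+3)^(k+1))^2 ≤ (6^k * 2^(k*(k-1)/2))^2 := by
      obtain ⟨m, rfl⟩ : ∃ m, k = m + 6 := ⟨k - 6, by omega⟩
      have hdvd : 2 ∣ (m+6)*(m+5) := by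
        rw [mul_comm]
        exact (Nat.even_mul_succ_self (m+5)).two_dvd
      have hev : (m+6)*(m+6-1)/2*2 = (m+6)*(m+5) := by
        have h9 : (m+6)*(m+6-1) = (m+6)*(m+5) := by norm_num
        rw [h9, Nat.div_mul_cancel hdvd]
      calc ((m+6+3)^(m+6+1))^2 = ((m+6+3)^2)^(m+6+1) := by rw [← pow_mul, ← pow_mul, Nat.mul_comm]
        _ ≤ (2^(m+6+2))^(m+6+1) := Nat.pow_le_pow_left (sq_bound (m+6) (by omega)) _
        _ = 2^((m+6+2)*(m+6+1)) := by rw [← pow_mul]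
        _ ≤ 2^(5*(m+6) + (m+6)*(m+5)) := Nat.pow_le_pow_right (by norm_num) (by nlinarith)
        _ = 2^(5*(m+6)) * 2^((m+6)*(m+5)) := by rw [pow_add]
        _ ≤ 6^(2*(m+6)) * 2^((m+6)*(m+5)) := by
            have h32 : (2:ℕ)^(5*(m+6)) = 32^(m+6) := by
              rw [show (32:ℕ) = 2^5 from rfl, ← pow_mul]
            have h36 : (6:ℕ)^(2*(m+6)) = 36^(m+6) := by
              rw [show (36:ℕ) = 6^2 from rfl, ← pow_mul]
            rw [h32, h36]
            exact Nat.mul_le_mul_right _ (Nat.pow_le_pow_left (by norm_num) _)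
        _ = (6^(m+6) * 2^((m+6)*(m+6-1)/2))^2 := by
            rw [mul_pow, ← pow_mul, ← pow_mul, hev, Nat.mul_comm (m+6) 2]
    exact (Nat.pow_le_pow_iff_left (two_ne_zero)).mp hsq


def matOf (n : ℕ) (u : ℕ) : Fin n → Fin n → Bool :=
  fun a b => if a = b then false else if a < b then u.testBit (a.val*n+b.val)
    else !u.testBit (b.val*n+a.val)

def decOf (n : ℕ) (m : Fin n → Fin n → Bool) : ℕ :=
  ∑ a : Fin n, ∑ b : Fin n, if a < b ∧ m a b = true then 2^(a.val*n+b.val) else 0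

def stepR (n : ℕ) (m : Fin n → Fin n → Bool) (s : Fin n → Bool) : Fin n → Bool :=
  fun b => s b || decide (∃ a, s a = true ∧ m a b = true)

def reach (n : ℕ) (m : Fin n → Fin n → Bool) (a : Fin n) : Fin n → Bool :=
  (stepR n m)^[n] (fun b => decide (b = a))

lemma reach_sound {n : ℕ} {m : Fin n → Fin n → Bool} {a b : Fin n}
    (h : reach n m a b = true) :
    Relation.ReflTransGen (fun x y => m x y = true) a b := by
  set R := fun x y => m x y = true with hR
  suffices H : ∀ (k : ℕ) (s : Fin n → Bool), (∀ c, s c = true → ReflTransGen R a c) →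
      ∀ c, (stepR n m)^[k] s c = true → ReflTransGen R a c by
    refine H n _ ?_ b h
    intro c hc
    simp only [decide_eq_true_eq] at hc
    subst hc; exact ReflTransGen.refl
  intro k
  induction k with
  | zero => intro s hs c hc; exact hs c hc
  | succ k ih =>
    intro s hs c hc
    rw [Function.iterate_succ_apply] at hc
    refine ih _ ?_ c hc
    intro d hd
    simp only [stepR, Bool.or_eq_true, decide_eq_true_eq] at hd
    rcases hd with hd | ⟨e, he, hm⟩
    · exact hs d hd
    · exact (hs e he).tail hm

lemma matOf_antisymm {n u} {a b : Fin n} (hab : a ≠ b) :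
    matOf n u a b = !matOf n u b a := by
  unfold matOf
  rcases lt_or_gt_of_ne hab with h | h
  · simp [hab, hab.symm, h, not_lt.2 h.le, h.ne']
  · simp [hab, hab.symm, h, not_lt.2 h.le, h.ne']

lemma small_bound (n : ℕ) (L : List ℕ)
    (hnd : L.Nodup)
    (hdec : ∀ u ∈ L, decOf n (matOf n u) = u)
    (hstr : ∀ u ∈ L, ∀ a b : Fin n, reach n (matOf n u) a b = true) :
    L.length ≤
      {o : Fin n → Fin n → Prop |
        (∀ a, ¬ o a a) ∧ (∀ a b, a ≠ b → (o a b ↔ ¬ o b a)) ∧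
        (∀ a b, Relation.ReflTransGen o a b)}.ncard := by
  classical
  set S := {o : Fin n → Fin n → Prop |
        (∀ a, ¬ o a a) ∧ (∀ a b, a ≠ b → (o a b ↔ ¬ o b a)) ∧
        (∀ a b, Relation.ReflTransGen o a b)} with hS
  set F : Finset (Fin n → Fin n → Prop) :=
    L.toFinset.image (fun u => toProp n (matOf n u)) with hF
  have hsub : (↑F : Set (Fin n → Fin n → Prop)) ⊆ S := by
    intro o ho
    simp only [hF, Finset.coe_image, Set.mem_image, Finset.mem_coe, List.mem_toFinset] at ho
    obtain ⟨u, hu, rfl⟩ := ho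
    refine ⟨?_, ?_, ?_⟩
    · intro a; simp [toProp, matOf]
    · intro a b hab
      have := matOf_antisymm (n := n) (u := u) hab
      simp only [toProp]
      constructor
      · intro h1 h2
        rw [this, h2] at h1; simp at h1
      · intro h1
        rw [this]
        rcases Bool.eq_false_or_eq_true (matOf n u b a) with h2 | h2
        · exact absurd h2 h1
        · rw [h2]; rfl
    · intro a b
      exact reach_sound (hstr u hu a b)
  have hinj : Set.InjOn (fun u => toProp n (matOf n u)) ↑L.toFinset := by
    intro u hu v hv h
    have : matOf n u = matOf n v := toProp_inj h
    simp only [Finset.mem_coe, List.mem_toFinset] at hu hv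
    rw [← hdec u hu, ← hdec v hv, this]
  calc L.length = L.toFinset.card := (List.toFinset_card_of_nodup hnd).symm
    _ = F.card := (Finset.card_image_of_injOn hinj).symm
    _ = (↑F : Set _).ncard := (Set.ncard_coe_finset F).symm
    _ ≤ S.ncard := Set.ncard_le_ncard hsub (Set.toFinite S)

def L4 : List ℕ := [8, 136, 72, 2120, 2052, 132, 2180, 2116, 12, 2060, 140, 2124, 130, 2114, 194, 2242]

lemma case4 : (4:ℕ) ^ (4 - 2) ≤
      {o : Fin 4 → Fin 4 → Prop |
        (∀ a, ¬ o a a) ∧ (∀ a b, a ≠ b → (o a b ↔ ¬ o b a)) ∧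
        (∀ a b, Relation.ReflTransGen o a b)}.ncard := by
  have h := small_bound 4 L4 (by decide) (by decide) (by decide)
  exact le_trans (by decide) h

def L5 : List ℕ := [16, 16400, 8208, 532496, 528, 16912, 8720, 533008, 272, 524560, 16656, 540944, 8464, 532752, 784, 525072, 17168, 8976, 533264, 144, 16528, 8336, 532624, 24720, 549008, 656, 17040, 8848, 533136, 25232, 400, 524688, 16784, 541072, 8592, 532880, 24976, 549264, 524296, 16392, 540680, 532488, 520, 524808, 16904, 541192, 8712, 533000, 524552, 16648, 540936, 532744, 776, 525064, 17160, 541448, 533256, 524424, 16520, 540808, 532616, 24712, 549000, 648, 524936, 17032, 541320, 8840, 533128, 25224, 549512, 524680, 16776, 541064, 532872, 549256, 24, 524312, 16408, 540696, 8216, 532504, 536, 524824, 16920, 8728, 533016, 280, 524568, 16664, 540952, 532760, 792, 525080, 17176, 533272, 152, 524440, 16536, 540824, 8344, 532632, 24728, 549016, 664, 524952, 17048, 8856, 533144, 25240, 408, 524696, 16792, 541080, 532888, 549272, 16388, 532484, 24580, 548868, 516, 16900, 8708, 532996, 25092]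

set_option maxRecDepth 4000 in
lemma case5 : (5:ℕ) ^ (5 - 2) ≤
      {o : Fin 5 → Fin 5 → Prop |
        (∀ a, ¬ o a a) ∧ (∀ a b, a ≠ b → (o a b ↔ ¬ o b a)) ∧
        (∀ a b, Relation.ReflTransGen o a b)}.ncard := by
  have h := small_bound 5 L5 (by decide) (by decide) (by decide)
  exact le_trans (by decide) h


lemma big_bound (k : ℕ) (hk : 3 ≤ k) :
    (k+3) ^ (k+1) ≤
      {o : Fin (k+3) → Fin (k+3) → Prop |
        (∀ a, ¬ o a a) ∧ (∀ a b, a ≠ b → (o a b ↔ ¬ o b a)) ∧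
        (∀ a b, Relation.ReflTransGen o a b)}.ncard := by
  classical
  set S := {o : Fin (k+3) → Fin (k+3) → Prop |
        (∀ a, ¬ o a a) ∧ (∀ a b, a ≠ b → (o a b ↔ ¬ o b a)) ∧
        (∀ a b, Relation.ReflTransGen o a b)} with hS
  have hmem : ∀ d : D k, toProp (k+3) (M k d) ∈ S := by
    intro d
    refine ⟨?_, ?_, ?_⟩
    · intro a
      simp [toProp, M_irrefl]
    · intro a b hab
      have hA := M_antisymm (d := d) hab
      simp only [toProp]
      constructor
      · intro h1 h2
        rw [hA, h2] at h1; simp at h1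
      · intro h1
        rw [hA]
        rcases Bool.eq_false_or_eq_true (M k d b a) with h2 | h2
        · exact absurd h2 h1
        · rw [h2]; rfl
    · exact M_strong d
  let Φ : D k → ↥S := fun d => ⟨toProp (k+3) (M k d), hmem d⟩
  have hΦ : Function.Injective Φ := by
    intro d d' h
    exact M_inj (toProp_inj (Subtype.ext_iff.mp h))
  calc (k+3) ^ (k+1) ≤ 6^k * 2^(k*(k-1)/2) := arith k hk
    _ = Nat.card (D k) := (card_D k).symm
    _ ≤ Nat.card ↥S := Nat.card_le_card_of_injective Φ hΦ
    _ = S.ncard := Nat.card_coe_set_eq S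

/-- For `n ≥ 4`, the number of strongly connected tournaments on a fixed set of `n`
labelled vertices is at least `n^(n−2)`; equivalently, the complete graph `K_n` has at
least as many totally cyclic orientations as spanning trees. -/
theorem card_strongly_connected_tournaments (n : ℕ) (hn : 4 ≤ n) :
    n ^ (n - 2) ≤
      {o : Fin n → Fin n → Prop |
        (∀ a, ¬ o a a) ∧ (∀ a b, a ≠ b → (o a b ↔ ¬ o b a)) ∧
        (∀ a b, Relation.ReflTransGen o a b)}.ncard := by
  by_cases h4 : n = 4
  · subst h4; exact case4
  by_cases h5 : n = 5
  · subst h5; exact case5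
  obtain ⟨k, hk, rfl⟩ : ∃ k, 3 ≤ k ∧ n = k + 3 := ⟨n - 3, by omega, by omega⟩
  have he : k + 3 - 2 = k + 1 := by omega
  rw [he]
  exact big_bound k hk
end

section
/- For every integer m ≥ 1, Σ_{k=0}^{m} k · C(2m−k−1, m−k) · 2^k = m · C(2m, m), where C(a,b) denotes the binomial coefficient a choose b. -/
/-!
The summand telescopes: with `H k = m · C(2m − k, m − k) · 2^k` one has
`k · C(2m − k − 1, m − k) · 2^k + H (k + 1) = H k` for `k < m`, because Pascal's rule and
`(r + 1) · C(n, r + 1) = (n − r) · C(n, r)` reduce it to an identity between two neighbouring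
binomial coefficients. The last summand equals `H m = m · 2^m`, and `H 0 = m · C(2m, m)`.
-/

open Finset

theorem sum_range_add_eq_of_add_succ_eq {M : Type*} [AddCommMonoid M] (f g : ℕ → M) (n : ℕ)
    (h : ∀ k < n, f k + g (k + 1) = g k) : ∑ k ∈ range n, f k + g n = g 0 := by
  induction n with
  | zero => simp
  | succ n ih =>
    rw [sum_range_succ, add_assoc, h n n.lt_succ_self]
    exact ih fun k hk => h k (Nat.lt_succ_of_lt hk)

theorem mul_choose_add_mul_choose (k r : ℕ) :
    k * (k + 2 * r + 1).choose (r + 1) + (k + r + 1) * (k + 2 * r + 1).choose r =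
      (k + r + 1) * (k + 2 * r + 1).choose (r + 1) := by
  have hsucc := Nat.choose_succ_right_eq (k + 2 * r + 1) r
  rw [show k + 2 * r + 1 - r = k + r + 1 by omega] at hsucc
  linarith

theorem sum_catalan_identity_general (m : ℕ) :
    ∑ k ∈ Finset.range (m + 1), k * Nat.choose (2 * m - k - 1) (m - k) * 2 ^ k =
      m * Nat.choose (2 * m) m := by
  set H : ℕ → ℕ := fun k => m * (2 * m - k).choose (m - k) * 2 ^ k
  have hstep : ∀ k < m, k * (2 * m - k - 1).choose (m - k) * 2 ^ k + H (k + 1) = H k := by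
    intro k hk
    obtain ⟨r, rfl⟩ := Nat.exists_eq_add_of_lt hk
    have e1 : 2 * (k + r + 1) - (k + 1) = k + 2 * r + 1 := by omega
    have e2 : 2 * (k + r + 1) - k = k + 2 * r + 1 + 1 := by omega
    have e3 : k + r + 1 - k = r + 1 := by omega
    have e4 : k + r + 1 - (k + 1) = r := by omega
    simp only [H, e1, e2, e3, e4, Nat.add_sub_cancel]
    rw [Nat.choose_succ_succ' (k + 2 * r + 1) r, pow_succ]
    linear_combination 2 ^ k * mul_choose_add_mul_choose k r
  have hlast : m * (2 * m - m - 1).choose (m - m) * 2 ^ m = H m := by simp [H]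
  rw [sum_range_succ, hlast, sum_range_add_eq_of_add_succ_eq _ H m hstep]
  simp [H, two_mul]

/-- For every `m ≥ 1`, `Σ_{k=0}^{m} k · C(2m−k−1, m−k) · 2^k = m · C(2m, m)`. -/
theorem sum_catalan_identity (m : ℕ) (hm : 1 ≤ m) :
    ∑ k ∈ Finset.range (m + 1), k * Nat.choose (2 * m - k - 1) (m - k) * 2 ^ k =
      m * Nat.choose (2 * m) m :=
  sum_catalan_identity_general m
end
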